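/- arXiv:2405.09656 — 3 statements merged into one kernel-verified Lean document; each statement's English description precedes it below -/
import Mathlib

section
/- Every distance critical simple graph has minimum degree at least 2; that is, if G is distance critical then every vertex of G has degree at least 2. -/
/-- A graph is *distance critical* if for every vertex `v` there is a pair of vertices of
`G − v` whose distance in `G − v` differs from their distance in `G`
(distances are `ℕ∞`-valued, `⊤` when there is no connecting path). -/
def IsDistanceCritical {V : Type*} (G : SimpleGraph V) : Prop :=
  ∀ v : V, ∃ x y : ({v}ᶜ : Set V),
    (G.induce ({v}ᶜ : Set V)).edist x y ≠ G.edist (x : V) (y : V)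

/-!
A vertex of degree at most one cannot be an interior vertex of a path, so every shortest
path between two other vertices avoids it. Deleting such a vertex therefore preserves all
distances, which a distance critical graph forbids.
-/

namespace SimpleGraph

variable {V W : Type*} {G : SimpleGraph V}

lemma edist_map_le {G' : SimpleGraph W} (f : G →g G') (u v : V) :
    G'.edist (f u) (f v) ≤ G.edist u v := by
  rcases eq_or_ne (G.edist u v) ⊤ with h | h
  · simp [h]
  · obtain ⟨p, hp⟩ := exists_walk_of_edist_ne_top h
    rw [← hp, ← p.length_map f]
    exact edist_le _

lemma Walk.IsPath.two_le_degree_of_mem_support {x y v : V} {p : G.Walk x y} (hp : p.IsPath)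
    (hv : v ∈ p.support) (hvx : v ≠ x) (hvy : v ≠ y) [Fintype (G.neighborSet v)] :
    2 ≤ G.degree v := by
  obtain ⟨i, rfl, hi⟩ := Walk.mem_support_iff_exists_getVert.mp hv
  have hi₀ : i ≠ 0 := by rintro rfl; exact hvx p.getVert_zero
  have hi_lt : i < p.length := lt_of_le_of_ne hi (by rintro rfl; exact hvy p.getVert_length)
  rw [← card_neighborSet_eq_degree, ← Nat.card_eq_fintype_card, Nat.card_coe_set_eq,
    ← hp.ncard_neighborSet_toSubgraph_internal_eq_two hi₀ hi_lt]
  exact Set.ncard_le_ncard (p.toSubgraph.neighborSet_subset _)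

lemma edist_induce_compl_singleton_le_of_degree_lt_two {v : V} [Fintype (G.neighborSet v)]
    (hv : G.degree v < 2) (x y : ({v}ᶜ : Set V)) :
    (G.induce ({v}ᶜ : Set V)).edist x y ≤ G.edist x y := by
  by_cases hr : G.Reachable x y
  · obtain ⟨p, hp, hlen⟩ := hr.exists_path_of_dist
    have hp_avoids : ∀ w ∈ p.support, w ∈ ({v}ᶜ : Set V) := by
      rintro w hw (rfl : w = v)
      exact hv.not_ge (hp.two_le_degree_of_mem_support hw (Ne.symm x.2) (Ne.symm y.2))
    have hlen_induce : (p.induce _ hp_avoids).length = p.length :=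
      (Walk.length_map _ _).symm.trans (congrArg Walk.length (p.map_induce hp_avoids))
    calc (G.induce ({v}ᶜ : Set V)).edist x y ≤ (p.induce _ hp_avoids).length := edist_le _
      _ = G.edist x y := by rw [hlen_induce, hlen, hr.coe_dist_eq_edist]
  · simp [edist_eq_top_of_not_reachable hr]

end SimpleGraph

open SimpleGraph in
theorem stmt_1 {V : Type*} [Fintype V] (G : SimpleGraph V) [DecidableRel G.Adj]
    (hG : IsDistanceCritical G) : ∀ v : V, 2 ≤ G.degree v := by
  intro v
  by_contra! hv
  obtain ⟨x, y, hxy⟩ := hG v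
  exact hxy <| le_antisymm (edist_induce_compl_singleton_le_of_degree_lt_two hv x y)
    (edist_map_le (Embedding.induce _).toHom x y)
end

section
/- Let G be a distance critical simple graph and v a vertex of G such that the vertex-deleted subgraph G − v is also distance critical. If v has degree at most 3 in G, then v is involved in some determining pair, i.e., there exist a vertex w and a vertex u such that {v, u} is a determining pair for w. -/
/-- `{a, b}` is a *determining pair* for `v` : `a` and `b` are distinct, nonadjacent,
and `v` is their unique common neighbor. -/
def IsDeterminingPair {V : Type*} (G : SimpleGraph V) (v a b : V) : Prop :=
  a ≠ b ∧ ¬ G.Adj a b ∧ G.Adj a v ∧ G.Adj b v ∧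
    ∀ w : V, G.Adj a w → G.Adj b w → w = v

open SimpleGraph


open SimpleGraph

lemma edist_le_of_walk_subset {V : Type*} (G : SimpleGraph V) (s : Set V) :
    ∀ {x y : V} (p : G.Walk x y) (hx : x ∈ s) (hy : y ∈ s),
      (∀ z ∈ p.support, z ∈ s) →
      (G.induce s).edist ⟨x, hx⟩ ⟨y, hy⟩ ≤ p.length := by
  intro x y p
  induction p with
  | nil =>
    intro hx hy _
    simp [SimpleGraph.edist_self]
  | @cons a b c hab q ih =>
    intro hx hy hp
    have hb : b ∈ s := hp b (by simp [Walk.support_cons])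
    have hq : ∀ z ∈ q.support, z ∈ s := fun z hz => hp z (by simp [Walk.support_cons, hz])
    have hadj : (G.induce s).Adj ⟨a, hx⟩ ⟨b, hb⟩ := by
      exact hab
    calc (G.induce s).edist ⟨a, hx⟩ ⟨c, hy⟩
        ≤ (G.induce s).edist ⟨a, hx⟩ ⟨b, hb⟩ + (G.induce s).edist ⟨b, hb⟩ ⟨c, hy⟩ :=
          SimpleGraph.edist_triangle
      _ ≤ 1 + q.length := by
          gcongr
          · rw [SimpleGraph.edist_eq_one_iff_adj.mpr hadj]
          · exact ih hb hy hq
      _ = ((Walk.cons hab q).length : ℕ∞) := by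
          rw [Walk.length_cons]
          push_cast
          ring

lemma edist_le_edist_induce {V : Type*} (G : SimpleGraph V) (s : Set V) (x y : s) :
    G.edist (x : V) (y : V) ≤ (G.induce s).edist x y := by
  rcases eq_or_ne ((G.induce s).edist x y) ⊤ with h | h
  · rw [h]; exact le_top
  · obtain ⟨p, hp⟩ := SimpleGraph.exists_walk_of_edist_ne_top h
    rw [← hp]
    have := SimpleGraph.edist_le (p.map (SimpleGraph.Embedding.induce s).toHom)
    rw [Walk.length_map] at this
    simpa using this

lemma reroute {W : Type*} (F : SimpleGraph W) (a c : W) (hca : c ≠ a)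
    (h : ∀ p, F.Adj a p → p = c ∨ F.Adj c p) :
    ∀ (n : ℕ) {x y : W} (wk : F.Walk x y), wk.length = n → x ≠ a → y ≠ a →
      ∃ wk' : F.Walk x y, wk'.length ≤ wk.length ∧ a ∉ wk'.support := by
  intro n
  induction n using Nat.strong_induction_on with
  | _ n ih =>
    intro x y wk hlen hx hy
    cases wk with
    | nil => exact ⟨Walk.nil, le_refl _, by simpa using hx.symm⟩
    | @cons _ u _ hxu q =>
      by_cases hu : a = u
      · subst hu
        -- q : Walk a y, y ≠ a so q not nil
        have hq : ¬ q.Nil := Walk.not_nil_of_ne (by exact fun hh => hy hh.symm)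
        obtain ⟨z, haz, r, rfl⟩ := Walk.not_nil_iff.mp hq
        have hz : z ≠ a := haz.ne'
        have hlt : r.length < n := by
          simp [Walk.length_cons] at hlen
          omega
        obtain ⟨r', hr'len, hr'sup⟩ := ih r.length hlt r rfl hz hy
        have hxc : x = c ∨ F.Adj c x := h x hxu.symm
        have hzc : z = c ∨ F.Adj c z := h z haz
        -- build walk from x to z of length ≤ 2 avoiding a
        have : ∃ s : F.Walk x z, s.length ≤ 2 ∧ a ∉ s.support := by
          rcases hxc with rfl | hcx
          · rcases hzc with rfl | hcz
            · exact ⟨Walk.nil, by simp, by simpa using hx.symm⟩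
            · exact ⟨Walk.cons hcz Walk.nil, by simp, by
                simp [Walk.support_cons]
                exact ⟨hx.symm, fun hh => hz hh.symm⟩⟩
          · rcases hzc with rfl | hcz
            · exact ⟨Walk.cons hcx.symm Walk.nil, by simp, by
                simp [Walk.support_cons]
                exact ⟨hx.symm, hca.symm⟩⟩
            · exact ⟨Walk.cons hcx.symm (Walk.cons hcz Walk.nil), by simp, by
                simp [Walk.support_cons]
                exact ⟨hx.symm, hca.symm, fun hh => hz hh.symm⟩⟩
        obtain ⟨s, hslen, hssup⟩ := this
        refine ⟨s.append r', ?_, ?_⟩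
        · rw [Walk.length_append]
          simp [Walk.length_cons]
          omega
        · rw [Walk.mem_support_append_iff]
          rintro (hh | hh)
          exacts [hssup hh, hr'sup hh]
      · have hlt : q.length < n := by
          simp [Walk.length_cons] at hlen
          omega
        obtain ⟨q', hq'len, hq'sup⟩ := ih q.length hlt q rfl (fun hh => hu hh.symm) hy
        refine ⟨Walk.cons hxu q', ?_, ?_⟩
        · simp [Walk.length_cons]
          omega
        · simp [Walk.support_cons]
          exact ⟨fun hh => hx hh.symm, hq'sup⟩

lemma lemA {W : Type*} (F : SimpleGraph W) (a c : W) (hca : c ≠ a)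
    (h : ∀ p, F.Adj a p → p = c ∨ F.Adj c p)
    (x y : ({a}ᶜ : Set W)) :
    (F.induce ({a}ᶜ : Set W)).edist x y = F.edist (x : W) (y : W) := by
  refine le_antisymm ?_ (edist_le_edist_induce F _ x y)
  rcases eq_or_ne (F.edist (x : W) (y : W)) ⊤ with htop | htop
  · rw [htop]; exact le_top
  · obtain ⟨p, hp⟩ := SimpleGraph.exists_walk_of_edist_ne_top htop
    have hx : (x : W) ≠ a := fun hh => x.2 (by simp [hh])
    have hy : (y : W) ≠ a := fun hh => y.2 (by simp [hh])
    obtain ⟨p', hp'len, hp'sup⟩ := reroute F a c hca h p.length p rfl hx hy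
    have hsub : ∀ z ∈ p'.support, z ∈ ({a}ᶜ : Set W) := by
      intro z hz
      simp only [Set.mem_compl_iff, Set.mem_singleton_iff]
      intro hh
      exact hp'sup (hh ▸ hz)
    have := edist_le_of_walk_subset F ({a}ᶜ : Set W) p' x.2 y.2 hsub
    calc (F.induce ({a}ᶜ : Set W)).edist x y ≤ (p'.length : ℕ∞) := this
      _ ≤ (p.length : ℕ∞) := by exact_mod_cast hp'len
      _ = F.edist (x : W) (y : W) := hp

lemma exists_det_mid {V : Type*} (G : SimpleGraph V) (v : V)
    (hGv : ∃ x y : ({v}ᶜ : Set V),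
      (G.induce ({v}ᶜ : Set V)).edist x y ≠ G.edist (x : V) (y : V)) :
    ∃ a b, IsDeterminingPair G v a b := by
  classical
  obtain ⟨x, y, hne⟩ := hGv
  have hle := edist_le_edist_induce G ({v}ᶜ : Set V) x y
  have hlt : G.edist (x : V) (y : V) < (G.induce ({v}ᶜ : Set V)).edist x y :=
    hle.lt_of_ne (Ne.symm hne)
  have htop : G.edist (x : V) (y : V) ≠ ⊤ := by
    intro hh
    rw [hh] at hlt
    exact lt_irrefl ⊤ (lt_of_lt_of_le hlt le_top)
  obtain ⟨p0, hp0⟩ := SimpleGraph.exists_walk_of_edist_ne_top htop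
  set p := p0.bypass with hpdef
  have hpath : p.IsPath := p0.bypass_isPath
  have hplen : (p.length : ℕ∞) = G.edist (x : V) (y : V) := by
    refine le_antisymm ?_ (SimpleGraph.edist_le p)
    rw [← hp0]
    exact_mod_cast p0.length_bypass_le
  have hfree : ∀ (wk : G.Walk (x : V) (y : V)), v ∉ wk.support →
      wk.length ≤ p.length → False := by
    intro wk hsup hlen
    have hsub : ∀ z ∈ wk.support, z ∈ ({v}ᶜ : Set V) := by
      intro z hz
      simp only [Set.mem_compl_iff, Set.mem_singleton_iff]
      intro hh
      exact hsup (hh ▸ hz)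
    have h1 : (G.induce ({v}ᶜ : Set V)).edist x y ≤ (wk.length : ℕ∞) :=
      edist_le_of_walk_subset G ({v}ᶜ : Set V) wk x.2 y.2 hsub
    have h2 : (wk.length : ℕ∞) ≤ (p.length : ℕ∞) := by exact_mod_cast hlen
    rw [hplen] at h2
    exact lt_irrefl _ (lt_of_le_of_lt (h1.trans h2) hlt)
  have hv : v ∈ p.support := by
    by_contra hh
    exact hfree p hh le_rfl
  set p1 := p.takeUntil v hv with hp1def
  set p2 := p.dropUntil v hv with hp2def
  have hspec : p1.append p2 = p := p.take_spec hv
  have hlen12 : p1.length + p2.length = p.length := by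
    rw [← hspec, Walk.length_append]
  have hpath1 : p1.IsPath := hpath.takeUntil hv
  have hpath2 : p2.IsPath := hpath.dropUntil hv
  have hxv : (x : V) ≠ v := fun hh => x.2 (by simp [hh])
  have hyv : (y : V) ≠ v := fun hh => y.2 (by simp [hh])
  have hn1 : ¬ p1.reverse.Nil := Walk.not_nil_of_ne (Ne.symm hxv)
  obtain ⟨a, hva, q1, hq1⟩ := Walk.not_nil_iff.mp hn1
  have hn2 : ¬ p2.Nil := Walk.not_nil_of_ne (Ne.symm hyv)
  obtain ⟨b, hvb, q2, hq2⟩ := Walk.not_nil_iff.mp hn2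
  have hq1len : q1.length + 1 = p1.length := by
    have := congrArg Walk.length hq1
    rw [Walk.length_reverse, Walk.length_cons] at this
    omega
  have hq2len : q2.length + 1 = p2.length := by
    have := congrArg Walk.length hq2
    rw [Walk.length_cons] at this
    omega
  have hvq1 : v ∉ q1.support := by
    have : (Walk.cons hva q1).IsPath := hq1 ▸ hpath1.reverse
    exact (Walk.cons_isPath_iff _ _).mp this |>.2
  have hvq2 : v ∉ q2.support := by
    have : (Walk.cons hvb q2).IsPath := hq2 ▸ hpath2
    exact (Walk.cons_isPath_iff _ _).mp this |>.2
  have hav : a ≠ v := hva.ne'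
  have hbv : b ≠ v := hvb.ne'
  have build : ∀ (r : G.Walk a b), v ∉ r.support → r.length ≤ 2 → False := by
    intro r hrs hrl
    apply hfree ((q1.reverse.append r).append q2)
    · rw [Walk.mem_support_append_iff, Walk.mem_support_append_iff]
      rintro ((hh | hh) | hh)
      · rw [Walk.support_reverse, List.mem_reverse] at hh
        exact hvq1 hh
      · exact hrs hh
      · exact hvq2 hh
    · rw [Walk.length_append, Walk.length_append, Walk.length_reverse]
      omega
  refine ⟨a, b, ?_, ?_, hva.symm, hvb.symm, ?_⟩
  · intro hh
    apply build ((Walk.nil : G.Walk a a).copy rfl hh)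
    · rw [Walk.support_copy]
      simpa using Ne.symm hav
    · simp
  · intro hab
    apply build hab.toWalk
    · intro hh
      rcases by simpa [Walk.support_cons] using hh with rfl | rfl
      · exact hav rfl
      · exact hbv rfl
    · simp
  · intro w haw hbw
    by_contra hwv
    apply build (Walk.cons haw (Walk.cons hbw.symm Walk.nil))
    · intro hh
      rcases by simpa [Walk.support_cons] using hh with rfl | rfl | rfl
      · exact hav rfl
      · exact hwv rfl
      · exact hbv rfl
    · simp

theorem stmt_7 {V : Type*} [Fintype V] (G : SimpleGraph V) [DecidableRel G.Adj]
    (hG : IsDistanceCritical G) (v : V)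
    (hF : IsDistanceCritical (G.induce ({v}ᶜ : Set V)))
    (hdeg : G.degree v ≤ 3) :
    ∃ w u : V, IsDeterminingPair G w v u := by
  classical
  by_contra hcon
  push_neg at hcon
  obtain ⟨a, b, hab, hnadj, hav, hbv, huniq⟩ := exists_det_mid G v (hG v)
  have hneg : ∀ u w : V, u ≠ v → ¬ G.Adj v u → G.Adj v w → G.Adj u w →
      ∃ w', w' ≠ w ∧ G.Adj v w' ∧ G.Adj u w' := by
    intro u w hu hnad hvw huw
    by_contra hno
    push_neg at hno
    refine hcon w u ⟨Ne.symm hu, hnad, hvw, huw, ?_⟩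
    intro w' h1 h2
    by_contra hne'
    exact hne' (hno w' hne' h1 h2).elim
  have hdeg' : (G.neighborFinset v).card ≤ 3 := hdeg
  have hamem : a ∈ G.neighborFinset v := (G.mem_neighborFinset v a).mpr hav.symm
  have hbmem : b ∈ G.neighborFinset v := (G.mem_neighborFinset v b).mpr hbv.symm
  have hmain : ∃ c, c ≠ a ∧ c ≠ v ∧ ∀ p, p ≠ v → G.Adj a p → p = c ∨ G.Adj c p := by
    by_cases hc : ∃ c, G.Adj v c ∧ c ≠ a ∧ c ≠ b
    · obtain ⟨c, hvc, hca, hcb⟩ := hc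
      have hmem : ∀ w', G.Adj v w' → w' = a ∨ w' = b ∨ w' = c := by
        intro w' hw'
        by_contra hh
        push_neg at hh
        obtain ⟨h1, h2, h3⟩ := hh
        have hsub : ({w', a, b, c} : Finset V) ⊆ G.neighborFinset v := by
          intro z hz
          simp only [Finset.mem_insert, Finset.mem_singleton] at hz
          rw [G.mem_neighborFinset]
          rcases hz with rfl | rfl | rfl | rfl
          exacts [hw', hav.symm, hbv.symm, hvc]
        have hcard : ({w', a, b, c} : Finset V).card = 4 := by
          rw [Finset.card_insert_of_notMem (by simp [h1, h2, h3]),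
            Finset.card_insert_of_notMem (by simp [hab, Ne.symm hca]),
            Finset.card_insert_of_notMem (by simp [Ne.symm hcb]),
            Finset.card_singleton]
        have := Finset.card_le_card hsub
        omega
      refine ⟨c, hca, hvc.ne', ?_⟩
      intro p hpv hap
      by_cases hpc : p = c
      · exact Or.inl hpc
      · right
        have hpb : p ≠ b := by rintro rfl; exact hnadj hap
        by_cases hpadj : G.Adj v p
        · rcases hmem p hpadj with rfl | rfl | rfl
          · exact absurd rfl hap.ne'
          · exact absurd rfl hpb
          · exact absurd rfl hpc
        · obtain ⟨w', hw'a, hvw', hpw'⟩ := hneg p a hpv hpadj hav.symm hap.symm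
          rcases hmem w' hvw' with rfl | rfl | rfl
          · exact absurd rfl hw'a
          · exact absurd (huniq p hap hpw'.symm) hpv
          · exact hpw'.symm
    · push_neg at hc
      refine ⟨b, Ne.symm hab, hbv.ne, ?_⟩
      intro p hpv hap
      exfalso
      have hpb : p ≠ b := by rintro rfl; exact hnadj hap
      by_cases hpadj : G.Adj v p
      · exact hpb (hc p hpadj hap.ne')
      · obtain ⟨w', hw'a, hvw', hpw'⟩ := hneg p a hpv hpadj hav.symm hap.symm
        have hwb : w' = b := hc w' hvw' hw'a
        subst hwb
        exact hpv (huniq p hap hpw'.symm)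
  obtain ⟨c, hca, hcv, hkey⟩ := hmain
  have ha : a ∈ ({v}ᶜ : Set V) := by simp [hav.ne]
  have hc' : c ∈ ({v}ᶜ : Set V) := by simp [hcv]
  have hcond : ∀ p : ({v}ᶜ : Set V), (G.induce ({v}ᶜ : Set V)).Adj ⟨a, ha⟩ p →
      p = ⟨c, hc'⟩ ∨ (G.induce ({v}ᶜ : Set V)).Adj ⟨c, hc'⟩ p := by
    intro p hp
    have hp' : G.Adj a (p : V) := hp
    have hpv : (p : V) ≠ v := fun hh => p.2 (by simp [hh])
    rcases hkey (p : V) hpv hp' with hh | hh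
    · exact Or.inl (Subtype.ext hh)
    · exact Or.inr hh
  obtain ⟨x, y, hxy⟩ := hF ⟨a, ha⟩
  exact hxy (lemA (G.induce ({v}ᶜ : Set V)) ⟨a, ha⟩ ⟨c, hc'⟩
    (fun hh => hca (congrArg Subtype.val hh)) hcond x y)
end

section
/- If G is a distance critical simple graph and H is any simple graph, then the Cartesian (box) product G □ H is distance critical; more precisely, every vertex of G □ H admits a determining pair. -/
/-! Deleting `v` lengthens the distance between some `x` and `y` exactly when `v` has a
determining pair. If some distance grows, a shortest `x`–`y` path must pass through `v`, and
the two neighbours `a`, `b` of `v` on it form a determining pair: `a = b`, an edge `ab`, or a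
second common neighbour would give an `x`–`y` walk that is shorter or avoids `v`. Conversely a
determining pair is at distance 2 in `G` but has no common neighbour in `G - v`.
A determining pair `{a, b}` of `v` in `G` yields the determining pair `{(a, y), (b, y)}` of
`(v, y)` in `G □ H`, since `a ≠ b` forces every common neighbour of `(a, y)` and `(b, y)` into
the layer `α × {y}`. -/

namespace SimpleGraph

variable {V : Type*} {G : SimpleGraph V}

theorem Walk.IsPath.exists_eq_append_cons_cons {x y v : V} {p : G.Walk x y} (hp : p.IsPath)
    (hv : v ∈ p.support) (hvx : v ≠ x) (hvy : v ≠ y) :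
    ∃ (a b : V) (r₁ : G.Walk x a) (r₂ : G.Walk b y) (ha : G.Adj a v) (hb : G.Adj v b),
      p = r₁.append (.cons ha (.cons hb r₂)) ∧ v ∉ r₁.support ∧ v ∉ r₂.support := by
  induction p with
  | nil => exact absurd (by simpa using hv) hvx
  | @cons x z y hxz q ih =>
    rw [Walk.cons_isPath_iff] at hp
    have hvq : v ∈ q.support := by simpa [hvx] using hv
    by_cases hvz : v = z
    · subst hvz
      cases q with
      | nil => exact absurd rfl hvy
      | cons hvb r₂ =>
        rw [Walk.cons_isPath_iff] at hp
        exact ⟨x, _, .nil, r₂, hxz, hvb, rfl, by simpa using hvx, hp.1.2⟩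
    · obtain ⟨a, b, r₁, r₂, ha, hb, rfl, hr₁, hr₂⟩ := ih hp.1 hvq hvz hvy
      exact ⟨a, b, .cons hxz r₁, r₂, ha, hb, rfl, by simp [hvx, hr₁], hr₂⟩

theorem edist_le_edist_induce (s : Set V) (x y : s) :
    G.edist (x : V) (y : V) ≤ (G.induce s).edist x y := by
  obtain hr | hr := em ((G.induce s).Reachable x y)
  · obtain ⟨p, hp⟩ := hr.exists_walk_length_eq_edist
    rw [← hp, ← p.length_map (Embedding.induce s).toHom]
    exact edist_le _
  · simp [edist_eq_top_of_not_reachable hr]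

@[simp]
theorem Walk.length_induce (s : Set V) {x y : V} (p : G.Walk x y)
    (hp : ∀ w ∈ p.support, w ∈ s) : (p.induce s hp).length = p.length := by
  induction p <;> simp_all

theorem edist_induce_compl_singleton_le {v : V} (x y : ({v}ᶜ : Set V)) (p : G.Walk x y)
    (hp : v ∉ p.support) : (G.induce {v}ᶜ).edist x y ≤ p.length := by
  have hs : ∀ w ∈ p.support, w ∈ ({v}ᶜ : Set V) := fun w hw (hwv : w = v) => hp (hwv ▸ hw)
  simpa using edist_le (p.induce {v}ᶜ hs)

end SimpleGraph

open SimpleGraph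

theorem exists_isDeterminingPair_of_edist_induce_ne {V : Type*} {G : SimpleGraph V} {v : V}
    (x y : ({v}ᶜ : Set V)) (h : (G.induce {v}ᶜ).edist x y ≠ G.edist (x : V) (y : V)) :
    ∃ a b : V, IsDeterminingPair G v a b := by
  have hlt := (edist_le_edist_induce _ x y).lt_of_ne' h
  have hxy := reachable_of_edist_ne_top hlt.ne_top
  obtain ⟨p, hp, hlen⟩ := hxy.exists_path_of_dist
  have minimal (W : G.Walk x y) : p.length ≤ W.length := hlen ▸ dist_le W
  have avoid (W : G.Walk x y) (hW : v ∉ W.support) : p.length < W.length := by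
    have := hlt.trans_le (edist_induce_compl_singleton_le x y W hW)
    rwa [← hxy.coe_dist_eq_edist, ← hlen, Nat.cast_lt] at this
  have hv : v ∈ p.support := by_contra fun hv => (avoid p hv).false
  obtain ⟨a, b, r₁, r₂, ha, hb, rfl, hr₁, hr₂⟩ :=
    hp.exists_eq_append_cons_cons hv (fun e => x.2 e.symm) (fun e => y.2 e.symm)
  refine ⟨a, b, ?_, fun hab => ?_, ha, hb.symm, fun w haw hbw => ?_⟩
  · rintro rfl
    have := minimal (r₁.append r₂)
    simp at this
  · have := minimal (r₁.append (.cons hab r₂))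
    simp at this
  · by_contra hwv
    have := avoid (r₁.append (.cons haw (.cons hbw.symm r₂)))
      (by simp [hr₁, hr₂, Ne.symm hwv, ha.ne'])
    simp at this

theorem IsDeterminingPair.edist_induce_ne {V : Type*} {G : SimpleGraph V} {v a b : V}
    (h : IsDeterminingPair G v a b) :
    ∃ x y : ({v}ᶜ : Set V), (G.induce {v}ᶜ).edist x y ≠ G.edist (x : V) (y : V) := by
  obtain ⟨hab, hnadj, hav, hbv, huniq⟩ := h
  refine ⟨⟨a, hav.ne⟩, ⟨b, hbv.ne⟩, ne_of_gt ?_⟩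
  have hG : G.edist a b = 2 := edist_eq_two_iff.mpr ⟨hab, hnadj, v, hav, hbv⟩
  refine hG ▸ two_lt_edist_iff.mpr
    ⟨fun e => hab (congrArg Subtype.val e), by simpa using hnadj, ?_⟩
  exact Set.eq_empty_of_forall_notMem fun w hw => w.2 (huniq w hw.1 hw.2)

theorem isDistanceCritical_iff_forall_exists_isDeterminingPair {V : Type*} {G : SimpleGraph V} :
    IsDistanceCritical G ↔ ∀ v, ∃ a b, IsDeterminingPair G v a b := by
  refine ⟨fun hG v => ?_, fun h v => ?_⟩
  · obtain ⟨x, y, hxy⟩ := hG v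
    exact exists_isDeterminingPair_of_edist_induce_ne x y hxy
  · obtain ⟨a, b, hab⟩ := h v
    exact hab.edist_induce_ne

theorem IsDeterminingPair.boxProd_left {α β : Type*} {G : SimpleGraph α} {v a b : α}
    (h : IsDeterminingPair G v a b) (H : SimpleGraph β) (y : β) :
    IsDeterminingPair (G □ H) (v, y) (a, y) (b, y) := by
  obtain ⟨hab, hnadj, hav, hbv, huniq⟩ := h
  refine ⟨by simpa using hab, by simpa [boxProd_adj] using hnadj,
    boxProd_adj.mpr (.inl ⟨hav, rfl⟩), boxProd_adj.mpr (.inl ⟨hbv, rfl⟩), ?_⟩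
  rintro ⟨w, z⟩ haw hbw
  simp only [boxProd_adj] at haw hbw
  aesop

theorem stmt_10_general {α β : Type*}
    (G : SimpleGraph α) (H : SimpleGraph β) (hG : IsDistanceCritical G) :
    IsDistanceCritical (G □ H) ∧
      ∀ p : α × β, ∃ a b : α × β, IsDeterminingPair (G □ H) p a b := by
  have hpair (p : α × β) : ∃ a b, IsDeterminingPair (G □ H) p a b := by
    obtain ⟨a, b, hab⟩ := isDistanceCritical_iff_forall_exists_isDeterminingPair.mp hG p.1
    exact ⟨_, _, hab.boxProd_left H p.2⟩
  exact ⟨isDistanceCritical_iff_forall_exists_isDeterminingPair.mpr hpair, hpair⟩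

theorem stmt_10 {α β : Type*} [Fintype α] [Fintype β]
    (G : SimpleGraph α) (H : SimpleGraph β) (hG : IsDistanceCritical G) :
    IsDistanceCritical (G □ H) ∧
      ∀ p : α × β, ∃ a b : α × β, IsDeterminingPair (G □ H) p a b :=
  stmt_10_general G H hG
end
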